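/- Let C₁, C₂ > 0, A > 0, β > 0 and C_(T) > 0 with A² > (1 + β^{−1}) C₂. Set T_n = C_(T) n^{1+β}, a_n = A/√(log(T_n+e)) and ρ_a = e^{−C₂/a²}. Then for every C′_(T) ∈ (0, C_(T)) there exist a constant C > 0 and an integer n₀ such that for all n ≥ n₀: e^{C₁/a_{n+1}²} · e^{−ρ_{a_{n+1}} (T_{n+1} − T_n)} ≤ C · n^{(β+1) C₁/A²} · exp( −(C′_(T))^{1 − C₂/A²} (β+1) n^{β − (β+1) C₂/A²} ). In particular, since β − (β+1)C₂/A² > 0, this quantity tends to 0 faster than any power of n. -/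

import Mathlib

open Filter Real Topology

/-!
Since `a(t)⁻² = log(t + e) / A²`, both exponentials in `μ_{n+1}` are powers of
`X = T_{n+1} + e`: `μ_{n+1} = X^{C₁/A²} exp(-X^{-C₂/A²} (T_{n+1} - T_n))`. For any `D > C_T` we
eventually have `X ≤ D n^{1+β}`, and Bernoulli's inequality gives
`T_{n+1} - T_n ≥ C_T (1+β) n^β`; choosing `D` with `C_T D^{-C₂/A²} = (C′_T)^{1-C₂/A²}` yields the
bound. Its exponential factor is `exp(-c n^s)` with `s = β - (β+1)C₂/A² > 0`, which beats every
power of `n`.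
-/

lemma exp_div_div_sqrt_log_sq {X : ℝ} (hX : 1 ≤ X) (c A : ℝ) :
    exp (c / (A / √(log X)) ^ 2) = X ^ (c / A ^ 2) := by
  rw [rpow_def_of_pos (by linarith), div_pow, sq_sqrt (log_nonneg hX), div_div_eq_mul_div]
  ring_nf

lemma add_one_rpow_eq_rpow_mul {x : ℝ} (hx : 0 < x) (r : ℝ) :
    (x + 1) ^ r = x ^ r * (1 + x⁻¹) ^ r := by
  rw [← mul_rpow hx.le (by positivity)]
  congr 1
  field_simp

lemma mul_rpow_sub_one_le_add_one_rpow_sub_rpow {r x : ℝ} (hr : 1 ≤ r) (hx : 0 < x) :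
    r * x ^ (r - 1) ≤ (x + 1) ^ r - x ^ r := by
  have hbernoulli : 1 + r * x⁻¹ ≤ (1 + x⁻¹) ^ r :=
    one_add_mul_self_le_rpow_one_add (by linarith [inv_pos.2 hx]) hr
  calc r * x ^ (r - 1) = x ^ r * (1 + r * x⁻¹) - x ^ r := by
        rw [rpow_sub_one hx.ne']; ring
    _ ≤ x ^ r * (1 + x⁻¹) ^ r - x ^ r := by gcongr
    _ = (x + 1) ^ r - x ^ r := by rw [add_one_rpow_eq_rpow_mul hx]

lemma rpow_mul_exp_neg_rpow_mul_le {X Y g G c p : ℝ} (hX : 0 < X) (hXY : X ≤ Y) (hc : 0 ≤ c)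
    (hp : 0 ≤ p) (hg : 0 ≤ g) (hgG : g ≤ G) :
    X ^ c * exp (-(X ^ (-p)) * G) ≤ Y ^ c * exp (-(Y ^ (-p)) * g) := by
  have hρ : Y ^ (-p) ≤ X ^ (-p) := rpow_le_rpow_of_nonpos hX hXY (by linarith)
  have hrate : -(X ^ (-p)) * G ≤ -(Y ^ (-p)) * g := by
    rw [neg_mul, neg_mul, neg_le_neg_iff]
    exact mul_le_mul hρ hgG hg (rpow_nonneg hX.le _)
  exact mul_le_mul (rpow_le_rpow hX.le hXY hc) (exp_le_exp.2 hrate) (exp_pos _).le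
    (rpow_nonneg (hX.le.trans hXY) c)

lemma eventually_mul_add_one_rpow_add_le {a b : ℝ} (hab : a < b) {r : ℝ} (hr : 0 < r) (K : ℝ) :
    ∀ᶠ x : ℝ in atTop, a * (x + 1) ^ r + K ≤ b * x ^ r := by
  have hratio : Tendsto (fun x : ℝ => a * (1 + x⁻¹) ^ r + K / x ^ r) atTop (𝓝 a) := by
    have hbase : Tendsto (fun x : ℝ => (1 + x⁻¹) ^ r) atTop (𝓝 1) := by
      simpa using (tendsto_inv_atTop_zero.const_add 1).rpow_const (Or.inr hr.le)
    simpa using (hbase.const_mul a).add (tendsto_const_nhds.div_atTop (tendsto_rpow_atTop hr))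
  filter_upwards [hratio.eventually_lt_const hab, eventually_gt_atTop 0] with x hlt hx
  have hxr : 0 < x ^ r := rpow_pos_of_pos hx r
  calc a * (x + 1) ^ r + K = x ^ r * (a * (1 + x⁻¹) ^ r + K / x ^ r) := by
        rw [add_one_rpow_eq_rpow_mul hx]; field_simp
    _ ≤ x ^ r * b := by gcongr
    _ = b * x ^ r := mul_comm _ _

lemma exists_gt_mul_rpow_neg_eq {a a' p : ℝ} (ha' : 0 < a') (haa' : a' < a) (hp₀ : 0 < p)
    (hp₁ : p < 1) : ∃ D, a < D ∧ a * D ^ (-p) = a' ^ (1 - p) := by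
  have ha : 0 < a := ha'.trans haa'
  set E := a / a' ^ (1 - p)
  have hE : 0 < E := by positivity
  have hDp : (E ^ p⁻¹) ^ p = E := rpow_inv_rpow hE.le hp₀.ne'
  refine ⟨E ^ p⁻¹, ?_, ?_⟩
  · rw [← rpow_lt_rpow_iff ha.le (by positivity) hp₀, hDp, lt_div_iff₀ (by positivity)]
    calc a ^ p * a' ^ (1 - p) < a ^ p * a ^ (1 - p) := by
          gcongr
      _ = a := by rw [← rpow_add ha]; norm_num
  · rw [rpow_neg (by positivity), hDp]
    simp only [E]
    field_simp

/-- The plateau error factor `μ_{N+1}` for `T_N = C_T N^{1+β}`, `a(t) = A / √(log (t + e))` and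
`ρ_a = e^{-C₂/a²}`. -/
noncomputable def plateauErrorFactor (C₁ C₂ A β CT N : ℝ) : ℝ :=
  exp (C₁ / (A / √(log (CT * (N + 1) ^ (1 + β) + exp 1))) ^ 2)
    * exp (-(exp (-(C₂ / (A / √(log (CT * (N + 1) ^ (1 + β) + exp 1))) ^ 2)))
      * (CT * (N + 1) ^ (1 + β) - CT * N ^ (1 + β)))

variable {C₁ C₂ A β CT : ℝ}

lemma plateauErrorFactor_eq {N : ℝ} (hCT : 0 ≤ CT) (hN : 0 ≤ N) :
    plateauErrorFactor C₁ C₂ A β CT N =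
      (CT * (N + 1) ^ (1 + β) + exp 1) ^ (C₁ / A ^ 2)
        * exp (-((CT * (N + 1) ^ (1 + β) + exp 1) ^ (-(C₂ / A ^ 2)))
          * (CT * (N + 1) ^ (1 + β) - CT * N ^ (1 + β))) := by
  have hX : 1 ≤ CT * (N + 1) ^ (1 + β) + exp 1 := by
    have : 0 ≤ CT * (N + 1) ^ (1 + β) := by positivity
    linarith [add_one_le_exp 1]
  rw [plateauErrorFactor, exp_div_div_sqrt_log_sq hX, ← neg_div, exp_div_div_sqrt_log_sq hX,
    neg_div]

lemma plateauErrorFactor_le {D N : ℝ} (hC₁ : 0 ≤ C₁) (hC₂ : 0 ≤ C₂) (hβ : 0 ≤ β)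
    (hCT : 0 ≤ CT) (hN : 0 < N) (hD : 0 < D)
    (hX : CT * (N + 1) ^ (1 + β) + exp 1 ≤ D * N ^ (1 + β)) :
    plateauErrorFactor C₁ C₂ A β CT N ≤ D ^ (C₁ / A ^ 2) * N ^ ((β + 1) * C₁ / A ^ 2)
      * exp (-(CT * D ^ (-(C₂ / A ^ 2))) * (β + 1) * N ^ (β - (β + 1) * C₂ / A ^ 2)) := by
  have hgap : CT * ((1 + β) * N ^ β) ≤ CT * (N + 1) ^ (1 + β) - CT * N ^ (1 + β) := by
    rw [← mul_sub]
    gcongr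
    simpa using mul_rpow_sub_one_le_add_one_rpow_sub_rpow (r := 1 + β) (by linarith) hN
  have hexp₁ : (1 + β) * (C₁ / A ^ 2) = (β + 1) * C₁ / A ^ 2 := by ring
  have hexp₂ : N ^ (β - (β + 1) * C₂ / A ^ 2) = N ^ ((1 + β) * -(C₂ / A ^ 2)) * N ^ β := by
    rw [← rpow_add hN]; ring_nf
  rw [plateauErrorFactor_eq hCT hN.le]
  calc _ ≤ (D * N ^ (1 + β)) ^ (C₁ / A ^ 2)
        * exp (-((D * N ^ (1 + β)) ^ (-(C₂ / A ^ 2))) * (CT * ((1 + β) * N ^ β))) :=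
        rpow_mul_exp_neg_rpow_mul_le (by positivity) hX (by positivity) (by positivity)
          (by positivity) hgap
    _ = _ := by
        rw [mul_rpow hD.le (by positivity), mul_rpow hD.le (by positivity), ← rpow_mul hN.le,
          ← rpow_mul hN.le, hexp₁, hexp₂]
        ring_nf

lemma eventually_plateauErrorFactor_le {CT' : ℝ} (hC₁ : 0 ≤ C₁) (hC₂ : 0 < C₂) (hβ : 0 ≤ β)
    (hCT' : 0 < CT') (hCT'CT : CT' < CT) (hCA : C₂ < A ^ 2) :
    ∃ C > 0, ∀ᶠ n : ℕ in atTop,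
      plateauErrorFactor C₁ C₂ A β CT n ≤ C * (n : ℝ) ^ ((β + 1) * C₁ / A ^ 2)
        * exp (-(CT' ^ (1 - C₂ / A ^ 2)) * (β + 1) * (n : ℝ) ^ (β - (β + 1) * C₂ / A ^ 2)) := by
  have hA : 0 < A ^ 2 := hC₂.trans hCA
  obtain ⟨D, hCTD, hD⟩ :=
    exists_gt_mul_rpow_neg_eq hCT' hCT'CT (div_pos hC₂ hA) ((div_lt_one hA).2 hCA)
  have hD₀ : 0 < D := hCT'.trans (hCT'CT.trans hCTD)
  refine ⟨D ^ (C₁ / A ^ 2), rpow_pos_of_pos hD₀ _, ?_⟩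
  filter_upwards [tendsto_natCast_atTop_atTop.eventually
      (eventually_mul_add_one_rpow_add_le hCTD (by linarith : (0 : ℝ) < 1 + β) (exp 1)),
    eventually_gt_atTop 0] with n hX hn
  simpa only [hD] using plateauErrorFactor_le (A := A) hC₁ hC₂.le hβ (hCT'.trans hCT'CT).le
    (Nat.cast_pos.2 hn) hD₀ hX

lemma tendsto_rpow_mul_exp_neg_mul_rpow_atTop_nhds_zero (r : ℝ) {c s : ℝ} (hc : 0 < c)
    (hs : 0 < s) : Tendsto (fun x : ℝ => x ^ r * exp (-c * x ^ s)) atTop (𝓝 0) := by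
  refine ((tendsto_rpow_mul_exp_neg_mul_atTop_nhds_zero (r / s) c hc).comp
    (tendsto_rpow_atTop hs)).congr' ?_
  filter_upwards [eventually_gt_atTop 0] with x hx
  rw [Function.comp_apply, ← rpow_mul hx.le, mul_div_cancel₀ _ hs.ne']

lemma tendsto_rpow_mul_plateauErrorFactor (hC₁ : 0 ≤ C₁) (hC₂ : 0 < C₂) (hβ : 0 ≤ β)
    (hCT : 0 < CT) (hCA : C₂ < A ^ 2) (hs : 0 < β - (β + 1) * C₂ / A ^ 2) (q : ℝ) :
    Tendsto (fun n : ℕ => (n : ℝ) ^ q * plateauErrorFactor C₁ C₂ A β CT n) atTop (𝓝 0) := by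
  obtain ⟨C, -, hbound⟩ := eventually_plateauErrorFactor_le (CT' := CT / 2) hC₁ hC₂ hβ
    (half_pos hCT) (half_lt_self hCT) hCA
  have hdecay := ((tendsto_rpow_mul_exp_neg_mul_rpow_atTop_nhds_zero (q + (β + 1) * C₁ / A ^ 2)
    (by positivity : 0 < (CT / 2) ^ (1 - C₂ / A ^ 2) * (β + 1)) hs).comp
      tendsto_natCast_atTop_atTop).const_mul C
  rw [mul_zero] at hdecay
  refine squeeze_zero' (Eventually.of_forall fun n => by unfold plateauErrorFactor; positivity)
    ?_ hdecay
  filter_upwards [hbound, eventually_gt_atTop 0] with n hμ hn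
  calc (n : ℝ) ^ q * plateauErrorFactor C₁ C₂ A β CT n
      ≤ (n : ℝ) ^ q * (C * (n : ℝ) ^ ((β + 1) * C₁ / A ^ 2)
        * exp (-((CT / 2) ^ (1 - C₂ / A ^ 2)) * (β + 1)
          * (n : ℝ) ^ (β - (β + 1) * C₂ / A ^ 2))) := by gcongr
    _ = _ := by
        rw [Function.comp_apply, rpow_add (Nat.cast_pos.2 hn)]
        ring_nf

theorem plateau_error_factor_decay_general (C₁ C₂ A β CT : ℝ) (hC₁ : 0 < C₁) (hC₂ : 0 < C₂)
    (hβ : 0 < β) (hCT : 0 < CT) (hAC : (1 + β⁻¹) * C₂ < A ^ 2) :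
    0 < β - (β + 1) * C₂ / A ^ 2 ∧
    (∀ CT' : ℝ, CT' ∈ Set.Ioo 0 CT → ∃ C : ℝ, 0 < C ∧ ∃ n₀ : ℕ, ∀ n : ℕ, n₀ ≤ n →
      Real.exp (C₁ / (A / Real.sqrt (Real.log (CT * ((n : ℝ) + 1) ^ (1 + β) + Real.exp 1))) ^ 2)
          * Real.exp (-(Real.exp (-(C₂ / (A / Real.sqrt
              (Real.log (CT * ((n : ℝ) + 1) ^ (1 + β) + Real.exp 1))) ^ 2)))
            * (CT * ((n : ℝ) + 1) ^ (1 + β) - CT * (n : ℝ) ^ (1 + β)))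
        ≤ C * (n : ℝ) ^ ((β + 1) * C₁ / A ^ 2)
          * Real.exp (-(CT' ^ (1 - C₂ / A ^ 2)) * (β + 1)
              * (n : ℝ) ^ (β - (β + 1) * C₂ / A ^ 2))) ∧
    ∀ q : ℝ, Tendsto (fun n : ℕ => (n : ℝ) ^ q
        * (Real.exp (C₁ / (A / Real.sqrt (Real.log (CT * ((n : ℝ) + 1) ^ (1 + β)
              + Real.exp 1))) ^ 2)
          * Real.exp (-(Real.exp (-(C₂ / (A / Real.sqrt
              (Real.log (CT * ((n : ℝ) + 1) ^ (1 + β) + Real.exp 1))) ^ 2)))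
            * (CT * ((n : ℝ) + 1) ^ (1 + β) - CT * (n : ℝ) ^ (1 + β)))))
      atTop (nhds 0) := by
  have hC₂β : 0 < (1 + β⁻¹) * C₂ := by positivity
  have hA : 0 < A ^ 2 := hC₂β.trans hAC
  have hCA : C₂ < A ^ 2 :=
    (le_mul_of_one_le_left hC₂.le (le_add_of_nonneg_right (inv_pos.2 hβ).le)).trans_lt hAC
  have hs : 0 < β - (β + 1) * C₂ / A ^ 2 := by
    rw [sub_pos, div_lt_iff₀ hA]
    calc (β + 1) * C₂ = β * ((1 + β⁻¹) * C₂) := by field_simp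
      _ < β * A ^ 2 := by gcongr
  refine ⟨hs, fun CT' hCT' => ?_, tendsto_rpow_mul_plateauErrorFactor hC₁.le hC₂ hβ.le hCT hCA hs⟩
  obtain ⟨C, hC, hbound⟩ := eventually_plateauErrorFactor_le hC₁.le hC₂ hβ.le hCT'.1 hCT'.2 hCA
  exact ⟨C, hC, eventually_atTop.1 hbound⟩

/-- Decay of the plateau error factor `μ_{n+1} = e^{C₁/a_{n+1}²} e^{−ρ_{a_{n+1}}(T_{n+1}−T_n)}`,
where `T_n = C_T n^{1+β}`, `a_n = A/√(log(T_n+e))` and `ρ_a = e^{−C₂/a²}`, under the condition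
`A² > (1+β⁻¹)C₂`; in particular it tends to `0` faster than any power of `n`. -/
theorem plateau_error_factor_decay (C₁ C₂ A β CT : ℝ) (hC₁ : 0 < C₁) (hC₂ : 0 < C₂)
    (hA : 0 < A) (hβ : 0 < β) (hCT : 0 < CT) (hAC : (1 + β⁻¹) * C₂ < A ^ 2) :
    0 < β - (β + 1) * C₂ / A ^ 2 ∧
    (∀ CT' : ℝ, CT' ∈ Set.Ioo 0 CT → ∃ C : ℝ, 0 < C ∧ ∃ n₀ : ℕ, ∀ n : ℕ, n₀ ≤ n →
      Real.exp (C₁ / (A / Real.sqrt (Real.log (CT * ((n : ℝ) + 1) ^ (1 + β) + Real.exp 1))) ^ 2)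
          * Real.exp (-(Real.exp (-(C₂ / (A / Real.sqrt
              (Real.log (CT * ((n : ℝ) + 1) ^ (1 + β) + Real.exp 1))) ^ 2)))
            * (CT * ((n : ℝ) + 1) ^ (1 + β) - CT * (n : ℝ) ^ (1 + β)))
        ≤ C * (n : ℝ) ^ ((β + 1) * C₁ / A ^ 2)
          * Real.exp (-(CT' ^ (1 - C₂ / A ^ 2)) * (β + 1)
              * (n : ℝ) ^ (β - (β + 1) * C₂ / A ^ 2))) ∧
    ∀ q : ℝ, Tendsto (fun n : ℕ => (n : ℝ) ^ q
        * (Real.exp (C₁ / (A / Real.sqrt (Real.log (CT * ((n : ℝ) + 1) ^ (1 + β)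
              + Real.exp 1))) ^ 2)
          * Real.exp (-(Real.exp (-(C₂ / (A / Real.sqrt
              (Real.log (CT * ((n : ℝ) + 1) ^ (1 + β) + Real.exp 1))) ^ 2)))
            * (CT * ((n : ℝ) + 1) ^ (1 + β) - CT * (n : ℝ) ^ (1 + β)))))
      atTop (nhds 0) :=
  plateau_error_factor_decay_general C₁ C₂ A β CT hC₁ hC₂ hβ hCT hAC
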